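/- arXiv:2307.02433 — 2 statements merged into one kernel-verified Lean document; each statement's English description precedes it below -/
import Mathlib

section
/- For a C⁴ function φ : ℝ → ℝ and grid spacing h > 0, the parametric finite difference approximation D_w φ(x) := φ(x) - φ(x-h) + ((1-w)/2)(φ(x+h) - 2φ(x) + φ(x-h)) + (w/2)(φ(x) - 2φ(x-h) + φ(x-2h)) satisfies D_w φ(x) = h φ'(x) + O(h³) for every w ∈ ℝ, and for w = 1/3 it satisfies D_{1/3} φ(x) = h φ'(x) + O(h⁴) (i.e., the approximation is second order accurate for any w and third order accurate when w = 1/3). -/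
open Set

lemma itw {f : ℝ → ℝ} (hf : ContDiff ℝ 4 f) {a b : ℝ} (hab : a < b) {k : ℕ}
    (hk : (k : WithTop ℕ∞) ≤ 4) {y : ℝ} (hy : y ∈ Icc a b) :
    iteratedDerivWithin k f (Icc a b) y = iteratedDeriv k f y := by
  rw [iteratedDerivWithin_eq_iteratedFDerivWithin, iteratedDeriv_eq_iteratedFDeriv]
  have h1 : HasFTaylorSeriesUpToOn 4 f (ftaylorSeries ℝ f) (Icc a b) :=
    (hasFTaylorSeriesUpToOn_univ_iff.2 (contDiff_iff_ftaylorSeries.1 hf)).mono (subset_univ _)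
  have := h1.eq_iteratedFDerivWithin_of_uniqueDiffOn hk (uniqueDiffOn_Icc hab) hy
  rw [← this]
  rfl

lemma taylor4 (f : ℝ → ℝ) (hf : ContDiff ℝ 4 f) (x : ℝ) :
    ∃ M > (0:ℝ), ∀ t : ℝ, |t| ≤ 2 →
      |f (x + t) - (f x + t * iteratedDeriv 1 f x + t^2/2 * iteratedDeriv 2 f x
        + t^3/6 * iteratedDeriv 3 f x)| ≤ M * t^4 := by
  have hcont : ContinuousOn (fun y => |iteratedDeriv 4 f y|) (Icc (x-2) (x+2)) :=
    ((hf.continuous_iteratedDeriv 4 le_rfl).abs).continuousOn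
  obtain ⟨y₀, -, hy₀⟩ := isCompact_Icc.exists_isMaxOn
    ⟨x, by constructor <;> linarith⟩ hcont
  set M₀ := |iteratedDeriv 4 f y₀| with hM₀
  have hM₀0 : 0 ≤ M₀ := abs_nonneg _
  refine ⟨M₀/6 + 1, by positivity, ?_⟩
  intro t ht
  have h2 : (x:ℝ) < x + 2 := by linarith
  have habs : ∀ u ∈ Icc (x-2) (x+2), |iteratedDeriv 4 f u| ≤ M₀ := fun u hu => hy₀ hu
  have ht4 : t^4 ≤ |t|^4 * 1 := by
    rw [mul_one, ← abs_pow, le_abs]; left; rfl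
  have habst : |t|^4 ≤ 2^4 := pow_le_pow_left₀ (abs_nonneg t) ht 4
  rcases le_or_gt 0 t with htpos | htneg
  · -- t ≥ 0 : expand on [x, x+2]
    have hmem : x + t ∈ Icc x (x + 2) := by
      rw [abs_of_nonneg htpos] at ht
      constructor <;> linarith
    have hfon : ContDiffOn ℝ ((3:ℕ) + 1) f (Icc x (x+2)) := by
      exact_mod_cast hf.contDiffOn
    have hC : ∀ y ∈ Icc x (x+2), ‖iteratedDerivWithin ((3:ℕ)+1) f (Icc x (x+2)) y‖ ≤ M₀ := by
      intro y hy
      rw [show (3:ℕ)+1 = 4 from rfl, itw hf h2 (by norm_num) hy, Real.norm_eq_abs]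
      exact habs y ⟨by linarith [hy.1], hy.2⟩
    have hbd := taylor_mean_remainder_bound (le_of_lt h2) hfon hmem hC
    have heval : taylorWithinEval f 3 (Icc x (x+2)) x (x + t)
        = f x + t * iteratedDeriv 1 f x + t^2/2 * iteratedDeriv 2 f x
          + t^3/6 * iteratedDeriv 3 f x := by
      rw [taylor_within_apply]
      have h0 := itw hf h2 (k := 0) (by norm_num) (left_mem_Icc.2 h2.le)
      have h1 := itw hf h2 (k := 1) (by norm_num) (left_mem_Icc.2 h2.le)
      have h2' := itw hf h2 (k := 2) (by norm_num) (left_mem_Icc.2 h2.le)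
      have h3 := itw hf h2 (k := 3) (by norm_num) (left_mem_Icc.2 h2.le)
      simp [Finset.sum_range_succ, h0, h1, h2', h3, iteratedDeriv_zero, smul_eq_mul,
        Nat.factorial]
      ring
    rw [heval, Real.norm_eq_abs] at hbd
    calc |f (x+t) - _| ≤ M₀ * (x + t - x)^(3+1) / Nat.factorial 3 := hbd
      _ = M₀/6 * t^4 := by norm_num [Nat.factorial]; ring
      _ ≤ (M₀/6 + 1) * t^4 := by
          rw [abs_of_nonneg htpos] at ht
          nlinarith [pow_nonneg htpos 4]
  · -- t < 0 : reflect
    set g : ℝ → ℝ := fun y => f (2*x - y) with hgdef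
    have hgc : ContDiff ℝ 4 g := hf.comp (contDiff_const.sub contDiff_id)
    have hgd : ∀ (k : ℕ) (y : ℝ), iteratedDeriv k g y = (-1:ℝ)^k * iteratedDeriv k f (2*x - y) := by
      intro k y
      have hg2 : g = fun u => (fun z => f (2*x + z)) (-u) := by
        funext u; simp only [hgdef]; ring_nf
      have e1 : iteratedDeriv k g y
          = (-1:ℝ)^k • iteratedDeriv k (fun z => f (2*x + z)) (-y) := by
        rw [hg2]; exact iteratedDeriv_comp_neg k (fun z => f (2*x + z)) y
      rw [e1, iteratedDeriv_comp_const_add, smul_eq_mul]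
      norm_num
      rw [show 2*x + -y = 2*x - y by ring]
    have hmt : 0 ≤ -t := by linarith
    have hmt2 : -t ≤ 2 := by rw [abs_of_neg htneg] at ht; exact ht
    have hmem : x + (-t) ∈ Icc x (x + 2) := by constructor <;> linarith
    have hfon : ContDiffOn ℝ ((3:ℕ) + 1) g (Icc x (x+2)) := by
      exact_mod_cast hgc.contDiffOn
    have hC : ∀ y ∈ Icc x (x+2), ‖iteratedDerivWithin ((3:ℕ)+1) g (Icc x (x+2)) y‖ ≤ M₀ := by
      intro y hy
      rw [show (3:ℕ)+1 = 4 from rfl, itw hgc (by linarith) (by norm_num) hy, Real.norm_eq_abs,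
        hgd]
      have : |(-1:ℝ)^4 * iteratedDeriv 4 f (2*x - y)| = |iteratedDeriv 4 f (2*x - y)| := by
        norm_num
      rw [this]
      exact habs _ ⟨by linarith [hy.2], by linarith [hy.1]⟩
    have hbd := taylor_mean_remainder_bound (by linarith : x ≤ x + 2) hfon hmem hC
    have hgval : g (x + (-t)) = f (x + t) := by
      simp only [hgdef]; ring_nf
    have heval : taylorWithinEval g 3 (Icc x (x+2)) x (x + (-t))
        = f x + t * iteratedDeriv 1 f x + t^2/2 * iteratedDeriv 2 f x
          + t^3/6 * iteratedDeriv 3 f x := by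
      rw [taylor_within_apply]
      have hlt : (x:ℝ) < x + 2 := by linarith
      have h0 := itw hgc hlt (k := 0) (by norm_num) (left_mem_Icc.2 hlt.le)
      have h1 := itw hgc hlt (k := 1) (by norm_num) (left_mem_Icc.2 hlt.le)
      have h2' := itw hgc hlt (k := 2) (by norm_num) (left_mem_Icc.2 hlt.le)
      have h3 := itw hgc hlt (k := 3) (by norm_num) (left_mem_Icc.2 hlt.le)
      simp [Finset.sum_range_succ, h0, h1, h2', h3, hgd, smul_eq_mul, Nat.factorial,
        show 2*x - x = x by ring]
      ring
    rw [heval, hgval, Real.norm_eq_abs] at hbd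
    calc |f (x+t) - _| ≤ M₀ * (x + (-t) - x)^(3+1) / Nat.factorial 3 := hbd
      _ = M₀/6 * t^4 := by norm_num [Nat.factorial]; ring
      _ ≤ (M₀/6 + 1) * t^4 := by
          nlinarith [pow_nonneg (sq_nonneg t) 2, sq_nonneg (t^2)]
open Set

lemma main_aux (φ : ℝ → ℝ) (x : ℝ) (M : ℝ) (hM0 : 0 < M)
    (hM : ∀ t : ℝ, |t| ≤ 2 →
      |φ (x + t) - (φ x + t * iteratedDeriv 1 φ x + t^2/2 * iteratedDeriv 2 φ x
        + t^3/6 * iteratedDeriv 3 φ x)| ≤ M * t^4) (w : ℝ) :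
    ∀ h : ℝ, 0 < h → h < 1 →
      |(φ x - φ (x - h) + (1 - w)/2 * (φ (x + h) - 2 * φ x + φ (x - h))
          + w/2 * (φ x - 2 * φ (x - h) + φ (x - 2*h)))
        - h * deriv φ x|
      ≤ ((|1-w| + |1+3*w| + 16*|w|)/2 * M) * h^4
        + (|1-3*w| * |iteratedDeriv 3 φ x| / 6) * h^3 := by
  intro h h0 h1
  set d1 := iteratedDeriv 1 φ x with hd1
  set d2 := iteratedDeriv 2 φ x with hd2
  set d3 := iteratedDeriv 3 φ x with hd3
  set P : ℝ → ℝ := fun t => φ x + t * d1 + t^2/2 * d2 + t^3/6 * d3 with hP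
  have hder : deriv φ x = d1 := by rw [hd1, iteratedDeriv_one]
  have e1 : |φ (x + h) - P h| ≤ M * h^4 := hM h (by rw [abs_of_pos h0]; linarith)
  have e2 : |φ (x + (-h)) - P (-h)| ≤ M * h^4 := by
    have := hM (-h) (by rw [abs_neg, abs_of_pos h0]; linarith)
    calc |φ (x + (-h)) - P (-h)| ≤ M * (-h)^4 := this
      _ = M * h^4 := by ring
  have e3 : |φ (x + (-(2*h))) - P (-(2*h))| ≤ 16 * M * h^4 := by
    have := hM (-(2*h)) (by rw [abs_neg, abs_of_pos (by linarith : (0:ℝ) < 2*h)]; linarith)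
    calc |φ (x + (-(2*h))) - P (-(2*h))| ≤ M * (-(2*h))^4 := this
      _ = 16 * M * h^4 := by ring
  have hx1 : x - h = x + (-h) := by ring
  have hx2 : x - 2*h = x + (-(2*h)) := by ring
  rw [hx1, hx2, hder]
  have key : (φ x - φ (x + -h) + (1 - w)/2 * (φ (x + h) - 2 * φ x + φ (x + -h))
      + w/2 * (φ x - 2 * φ (x + -h) + φ (x + -(2*h)))) - h * d1
    = ((1-3*w)/6 * d3 * h^3 + ((1-w)/2 * (φ (x+h) - P h)
      - (1+3*w)/2 * (φ (x + -h) - P (-h)) + w/2 * (φ (x + -(2*h)) - P (-(2*h))))) := by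
    simp only [hP]; ring
  rw [key]
  have T1 : |(1-3*w)/6 * d3 * h^3| = |1-3*w| * |d3| / 6 * h^3 := by
    rw [abs_mul, abs_mul, abs_div, abs_pow, abs_of_pos h0, show |(6:ℝ)| = 6 by norm_num]
    ring
  have B1 : |(1-w)/2 * (φ (x+h) - P h)| ≤ |1-w|/2 * (M * h^4) := by
    rw [abs_mul, abs_div]
    have : |(2:ℝ)| = 2 := by norm_num
    rw [this]; gcongr
  have B2 : |(1+3*w)/2 * (φ (x + -h) - P (-h))| ≤ |1+3*w|/2 * (M * h^4) := by
    rw [abs_mul, abs_div]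
    have : |(2:ℝ)| = 2 := by norm_num
    rw [this]; gcongr
  have B3 : |w/2 * (φ (x + -(2*h)) - P (-(2*h)))| ≤ |w|/2 * (16 * M * h^4) := by
    rw [abs_mul, abs_div]
    have : |(2:ℝ)| = 2 := by norm_num
    rw [this]; gcongr
  calc |(1-3*w)/6 * d3 * h^3 + ((1-w)/2 * (φ (x+h) - P h)
      - (1+3*w)/2 * (φ (x + -h) - P (-h)) + w/2 * (φ (x + -(2*h)) - P (-(2*h))))|
      ≤ |(1-3*w)/6 * d3 * h^3| + |(1-w)/2 * (φ (x+h) - P h)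
      - (1+3*w)/2 * (φ (x + -h) - P (-h)) + w/2 * (φ (x + -(2*h)) - P (-(2*h)))| := abs_add_le _ _
    _ ≤ |(1-3*w)/6 * d3 * h^3| + (|(1-w)/2 * (φ (x+h) - P h)
      - (1+3*w)/2 * (φ (x + -h) - P (-h))| + |w/2 * (φ (x + -(2*h)) - P (-(2*h)))|) := by
        gcongr; exact abs_add_le _ _
    _ ≤ |(1-3*w)/6 * d3 * h^3| + ((|(1-w)/2 * (φ (x+h) - P h)|
      + |(1+3*w)/2 * (φ (x + -h) - P (-h))|) + |w/2 * (φ (x + -(2*h)) - P (-(2*h)))|) := by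
        gcongr; exact abs_sub _ _
    _ ≤ |1-3*w| * |d3| / 6 * h^3 + ((|1-w|/2 * (M * h^4) + |1+3*w|/2 * (M * h^4))
        + |w|/2 * (16 * M * h^4)) := by
        rw [T1]; gcongr
    _ = ((|1-w| + |1+3*w| + 16*|w|)/2 * M) * h^4 + (|1-3*w| * |d3| / 6) * h^3 := by ring

/-- The parametric finite difference approximation
    D_w φ(x) = φ(x) - φ(x-h) + ((1-w)/2)(φ(x+h) - 2φ(x) + φ(x-h))
             + (w/2)(φ(x) - 2φ(x-h) + φ(x-2h))
    of h·φ'(x) is second order accurate for every w and third order accurate for w = 1/3. -/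
theorem stmt_2 (φ : ℝ → ℝ) (hφ : ContDiff ℝ 4 φ) (x : ℝ) :
    (∀ w : ℝ, ∃ C > (0:ℝ), ∃ δ > (0:ℝ), ∀ h : ℝ, 0 < h → h < δ →
      |(φ x - φ (x - h) + (1 - w)/2 * (φ (x + h) - 2 * φ x + φ (x - h))
          + w/2 * (φ x - 2 * φ (x - h) + φ (x - 2*h)))
        - h * deriv φ x| ≤ C * h^3)
    ∧ (∃ C > (0:ℝ), ∃ δ > (0:ℝ), ∀ h : ℝ, 0 < h → h < δ →
      |(φ x - φ (x - h) + (1 - (1/3 : ℝ))/2 * (φ (x + h) - 2 * φ x + φ (x - h))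
          + (1/3 : ℝ)/2 * (φ x - 2 * φ (x - h) + φ (x - 2*h)))
        - h * deriv φ x| ≤ C * h^4) := by
  obtain ⟨M, hM0, hM⟩ := taylor4 φ hφ x
  constructor
  · intro w
    refine ⟨(|1-w| + |1+3*w| + 16*|w|)/2 * M + |1-3*w| * |iteratedDeriv 3 φ x| / 6 + 1,
      by positivity, 1, one_pos, ?_⟩
    intro h h0 h1
    have hb := main_aux φ x M hM0 hM w h h0 h1
    have h43 : h^4 ≤ h^3 := by nlinarith [pow_pos h0 3]
    have h3pos : (0:ℝ) < h^3 := pow_pos h0 3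
    have hC1 : (0:ℝ) ≤ (|1-w| + |1+3*w| + 16*|w|)/2 * M := by positivity
    nlinarith [mul_nonneg hC1 (sub_nonneg.2 h43)]
  · refine ⟨(|1-(1/3:ℝ)| + |1+3*(1/3:ℝ)| + 16*|(1/3:ℝ)|)/2 * M + 1, by positivity,
      1, one_pos, ?_⟩
    intro h h0 h1
    have hb := main_aux φ x M hM0 hM (1/3) h h0 h1
    have hz : |1-3*((1:ℝ)/3)| * |iteratedDeriv 3 φ x| / 6 = 0 := by norm_num
    rw [hz, zero_mul, add_zero] at hb
    nlinarith [pow_pos h0 4]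
end

section
/- Consider the implicit update Ψ_i^n - Ψ_i^{n-1} + C · a_i · (Ψ_i^n - Ψ_{i-1}^n) = 0 on a periodic grid of I nodes, where C > 0 and all coefficients a_i ≥ 0 and the update is well-defined (1 + C a_i > 0). Then the total variation is diminishing: Σ_i |Ψ_i^n - Ψ_{i-1}^n| ≤ Σ_i |Ψ_i^{n-1} - Ψ_{i-1}^{n-1}| (Harten-type TVD criterion for an implicit upwind scheme with nonnegative coefficients). -/
/-- Harten-type TVD property of the implicit upwind update
    Ψᵢⁿ - Ψᵢⁿ⁻¹ + C aᵢ (Ψᵢⁿ - Ψᵢ₋₁ⁿ) = 0 on a periodic grid with C > 0 and aᵢ ≥ 0. -/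
theorem stmt_6 (I : ℕ) [NeZero I] (C : ℝ) (hC : 0 < C)
    (a Ψ Ψold : ZMod I → ℝ)
    (ha : ∀ i, 0 ≤ a i)
    (hwd : ∀ i, 0 < 1 + C * a i)
    (hscheme : ∀ i, Ψ i - Ψold i + C * a i * (Ψ i - Ψ (i - 1)) = 0) :
    ∑ i : ZMod I, |Ψ i - Ψ (i - 1)| ≤ ∑ i : ZMod I, |Ψold i - Ψold (i - 1)| := by
  have key : ∀ i : ZMod I, (1 + C * a i) * |Ψ i - Ψ (i - 1)| ≤
      |Ψold i - Ψold (i - 1)| + C * a (i - 1) * |Ψ (i - 1) - Ψ (i - 1 - 1)| := by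
    intro i
    have h1 := hscheme i
    have h2 := hscheme (i - 1)
    have heq : (1 + C * a i) * (Ψ i - Ψ (i - 1)) =
        (Ψold i - Ψold (i - 1)) + C * a (i - 1) * (Ψ (i - 1) - Ψ (i - 1 - 1)) := by
      linear_combination h1 - h2
    calc (1 + C * a i) * |Ψ i - Ψ (i - 1)|
        = |(1 + C * a i) * (Ψ i - Ψ (i - 1))| := by
          rw [abs_mul, abs_of_pos (hwd i)]
      _ = |(Ψold i - Ψold (i - 1)) + C * a (i - 1) * (Ψ (i - 1) - Ψ (i - 1 - 1))| := by
          rw [heq]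
      _ ≤ |Ψold i - Ψold (i - 1)| + |C * a (i - 1) * (Ψ (i - 1) - Ψ (i - 1 - 1))| :=
          abs_add_le _ _
      _ = _ := by
          rw [abs_mul, abs_mul, abs_of_pos hC, abs_of_nonneg (ha _)]
  have hsum : ∑ i : ZMod I, (1 + C * a i) * |Ψ i - Ψ (i - 1)| ≤
      ∑ i : ZMod I, (|Ψold i - Ψold (i - 1)| +
        C * a (i - 1) * |Ψ (i - 1) - Ψ (i - 1 - 1)|) :=
    Finset.sum_le_sum fun i _ => key i
  have hreidx : ∑ i : ZMod I, C * a (i - 1) * |Ψ (i - 1) - Ψ (i - 1 - 1)| =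
      ∑ i : ZMod I, C * a i * |Ψ i - Ψ (i - 1)| :=
    Fintype.sum_equiv (Equiv.subRight (1 : ZMod I)) _ _ (fun i => rfl)
  have hexp : ∑ i : ZMod I, (1 + C * a i) * |Ψ i - Ψ (i - 1)| =
      ∑ i : ZMod I, |Ψ i - Ψ (i - 1)| + ∑ i : ZMod I, C * a i * |Ψ i - Ψ (i - 1)| := by
    rw [← Finset.sum_add_distrib]
    exact Finset.sum_congr rfl fun i _ => by ring
  rw [Finset.sum_add_distrib, hreidx] at hsum
  rw [hexp] at hsum
  linarith
end
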